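/- arXiv:math/0309012 — 5 statements merged into one kernel-verified Lean document; each statement's English description precedes it below -/
import Mathlib

section
/- Let K be a field of characteristic different from 2 and V a finite-dimensional K-vector space. Let τ : V → V be a linear involution (τ∘τ = id) whose (−1)-eigenspace ker(τ + id) is one-dimensional, and let m : V → V be a linear map which anticommutes with τ, i.e. m∘τ = −τ∘m. Then the rank of m is at most 2, i.e. dim(range m) ≤ 2. -/
/-- **Rank bound for maps anticommuting with an involution.** Over a field of characteristic
different from 2, if `τ` is a linear involution of a finite-dimensional vector space whose
`(-1)`-eigenspace `ker (τ + id)` is one-dimensional, then any linear map `m` with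
`m ∘ τ = - τ ∘ m` has rank at most 2. -/
theorem rank_le_two_of_anticommutes_with_involution
    {K V : Type*} [Field K] [AddCommGroup V] [Module K V] [FiniteDimensional K V]
    (hchar : (2 : K) ≠ 0)
    (τ m : V →ₗ[K] V)
    (hinv : τ ∘ₗ τ = LinearMap.id)
    (heig : Module.finrank K (LinearMap.ker (τ + LinearMap.id)) = 1)
    (hanti : m ∘ₗ τ = -(τ ∘ₗ m)) :
    Module.finrank K (LinearMap.range m) ≤ 2 := by
  set N := LinearMap.ker (τ + LinearMap.id) with hN
  have htau2 : ∀ v : V, τ (τ v) = v := fun v => congrArg (· v) hinv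
  have hantip : ∀ v : V, m (τ v) = -τ (m v) := fun v => congrArg (· v) hanti
  have hsub : LinearMap.range m ≤ N ⊔ Submodule.map m N := by
    rintro _ ⟨v, rfl⟩
    set p := (2:K)⁻¹ • (v + τ v) with hp
    set q := (2:K)⁻¹ • (v - τ v) with hq
    have hv : v = p + q := by
      rw [hp, hq, ← smul_add]
      have : v + τ v + (v - τ v) = (2:K) • v := by
        rw [two_smul]; abel
      rw [this, smul_smul, inv_mul_cancel₀ hchar, one_smul]
    have htp : τ p = p := by
      rw [hp, map_smul, map_add, htau2]
      rw [add_comm]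
    have hqN : q ∈ N := by
      simp only [hN, LinearMap.mem_ker, LinearMap.add_apply, LinearMap.id_apply]
      rw [hq, map_smul, map_sub, htau2, ← smul_add]
      have : τ v - v + (v - τ v) = 0 := by abel
      rw [this, smul_zero]
    have hmpN : m p ∈ N := by
      simp only [hN, LinearMap.mem_ker, LinearMap.add_apply, LinearMap.id_apply]
      have h1 : τ (m p) = - m p := by
        conv_lhs => rw [← htp, hantip, map_neg, htau2]
      rw [h1]; abel
    have : m v = m p + m q := by rw [hv, map_add]
    rw [this]
    exact Submodule.add_mem_sup hmpN ⟨q, hqN, rfl⟩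
  calc Module.finrank K (LinearMap.range m)
      ≤ Module.finrank K (N ⊔ Submodule.map m N : Submodule K V) :=
        Submodule.finrank_mono hsub
    _ ≤ Module.finrank K N + Module.finrank K (Submodule.map m N) :=
        Submodule.finrank_add_le_finrank_add_finrank _ _
    _ ≤ 1 + 1 := by
        gcongr
        · exact heig.le
        · exact (Submodule.finrank_map_le m N).trans heig.le
    _ = 2 := rfl
end

section
/- Let K be a field, V a K-vector space, B : V → V → K a symmetric bilinear form, and ∗ : V → V → V a bilinear multiplication. Let l, w ∈ V satisfy B(l,l) = −2 and B(w,l) = 1, and define τ : V → V by τ(x) = x + B(x,l)·l. Assume τ is multiplicative: τ(x ∗ y) = τ(x) ∗ τ(y) for all x, y ∈ V. Then l ∗ l lies in the linear span of {l, w ∗ l}, and more generally l ∗ x lies in the linear span of {l, w ∗ l} for every x ∈ V; consequently the linear map x ↦ l ∗ x has rank at most 2. -/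
/-- **The ideal generated by a Lagrangian sphere class has rank at most 2.** If `B` is a
symmetric bilinear form with `B l l = -2`, `B w l = 1`, and the Picard–Lefschetz
transformation `τ x = x + B x l • l` is multiplicative for a bilinear product `∗`, then
`l ∗ l` and every `l ∗ x` lie in the span of `{l, w ∗ l}`; in particular multiplication by
`l` has rank at most 2. -/
theorem quantum_ideal_rank_le_two
    {K V : Type*} [Field K] [AddCommGroup V] [Module K V]
    (B : V →ₗ[K] V →ₗ[K] K) (hsymm : ∀ x y : V, B x y = B y x)
    (mul : V →ₗ[K] V →ₗ[K] V)
    (l w : V) (hll : B l l = -2) (hwl : B w l = 1)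
    (τ : V → V) (hτ : ∀ x : V, τ x = x + B x l • l)
    (hmul : ∀ x y : V, τ (mul x y) = mul (τ x) (τ y)) :
    mul l l ∈ Submodule.span K {l, mul w l} ∧
    (∀ x : V, mul l x ∈ Submodule.span K {l, mul w l}) ∧
    Module.finrank K (LinearMap.range (mul l)) ≤ 2 := by
  have hτl : τ l = -l := by rw [hτ, hll]; module
  have hτw : τ w = w + l := by rw [hτ, hwl, one_smul]
  -- key identity from hmul w l
  have E1 := hmul w l
  rw [hτ (mul w l), hτl, hτw] at E1
  have key1 : mul l l = (-(B (mul w l) l)) • l + (-(2:K)) • (mul w l) := by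
    have h2 : mul (w + l) (-l) = -(mul w l) - mul l l := by
      simp [map_add, map_neg]
      abel
    rw [h2] at E1
    linear_combination (norm := module) E1
  have key : ∀ x : V, mul l x
      = (B (mul w x) l + B x l * B (mul w l) l) • l + (B x l) • (mul w l) := by
    intro x
    have E2 := hmul w x
    rw [hτ (mul w x), hτw, hτ x] at E2
    have h3 : mul (w + l) (x + B x l • l)
        = mul w x + (B x l) • mul w l + mul l x + (B x l) • mul l l := by
      simp [map_add, map_smul]
      abel
    rw [h3, key1] at E2
    linear_combination (norm := module) -E2
  set s := Submodule.span K {l, mul w l} with hs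
  have hls : l ∈ s := Submodule.subset_span (by simp)
  have hwls : mul w l ∈ s := Submodule.subset_span (by simp)
  have mem : ∀ x : V, mul l x ∈ s := by
    intro x
    rw [key x]
    exact Submodule.add_mem _ (Submodule.smul_mem _ _ hls) (Submodule.smul_mem _ _ hwls)
  refine ⟨mem l, mem, ?_⟩
  have hrange : LinearMap.range (mul l) ≤ s := by
    rintro _ ⟨x, rfl⟩; exact mem x
  classical
  have hcard : Module.finrank K s ≤ 2 := by
    have hset : ({l, mul w l} : Set V) = (({l, mul w l} : Finset V) : Set V) := by simp
    have h := finrank_span_finset_le_card (R := K) ({l, mul w l} : Finset V)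
    rw [Set.finrank, ← hset, ← hs] at h
    exact h.trans (Finset.card_insert_le _ _ |>.trans (by simp))
  have hfin : FiniteDimensional K s := by
    rw [hs]
    exact FiniteDimensional.span_of_finite K ((Set.finite_singleton _).insert _)
  exact (Submodule.finrank_mono hrange).trans hcard
end

section
/- Let g : ℝ → ℝ be a continuous function with g(0) = 1/2. Define the model Dehn twist τ : T → ℝ³ × ℝ³ by τ(u,v) = σ_{2π·g(‖u‖)}(u,v) when u ≠ 0 and τ(0,v) = (0,−v) when u = 0. Then τ is a continuous map from T (with the subspace topology) to T; in particular the twist defined off the zero section by the flow extends continuously over the zero section as the antipodal map. -/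
open scoped Classical

/-- The normalized geodesic flow on the standard model `T*S² ⊂ ℝ³ × ℝ³`. -/
noncomputable def geoFlow (t : ℝ)
    (p : EuclideanSpace ℝ (Fin 3) × EuclideanSpace ℝ (Fin 3)) :
    EuclideanSpace ℝ (Fin 3) × EuclideanSpace ℝ (Fin 3) :=
  (Real.cos t • p.1 - (Real.sin t * ‖p.1‖) • p.2,
   Real.cos t • p.2 + (Real.sin t / ‖p.1‖) • p.1)

/-- The standard model `T = {(u,v) : ⟨u,v⟩ = 0, ‖v‖ = 1}` of the cotangent bundle `T*S²`. -/
def cotangentS2 : Set (EuclideanSpace ℝ (Fin 3) × EuclideanSpace ℝ (Fin 3)) :=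
  {p | inner ℝ p.1 p.2 = (0 : ℝ) ∧ ‖p.2‖ = 1}

/-- The model Dehn twist: `σ_{2π g(‖u‖)}` off the zero section, extended over the zero
section by the antipodal map. -/
noncomputable def modelDehnTwist (g : ℝ → ℝ)
    (p : EuclideanSpace ℝ (Fin 3) × EuclideanSpace ℝ (Fin 3)) :
    EuclideanSpace ℝ (Fin 3) × EuclideanSpace ℝ (Fin 3) :=
  if p.1 = 0 then (0, -p.2) else geoFlow (2 * Real.pi * g ‖p.1‖) p

/-!
The only term of `σ_{θ(‖u‖)}(u, v)` that is singular at `u = 0` is `(sin θ(‖u‖) / ‖u‖) • u`,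
whose norm is `|sin θ(‖u‖)|`; this tends to `|sin θ(0)| = |sin π| = 0`. So the flow formula,
read with the junk value `x / 0 = 0`, is continuous on all of `ℝ³ × ℝ³`, and at `u = 0` it is
already the antipodal map `(0, v) ↦ (0, cos π • v)`. Off the zero section `σ_t` preserves `T`:
it rotates the orthonormal pair `(u / ‖u‖, v)` by the angle `t`.
-/

open Real Filter Topology

local notation "ℝ³" => EuclideanSpace ℝ (Fin 3)

theorem continuous_smul_div_norm {E : Type*} [NormedAddCommGroup E] [NormedSpace ℝ E]
    {s : ℝ → ℝ} (hs : Continuous s) (hs0 : s 0 = 0) :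
    Continuous fun u : E => (s ‖u‖ / ‖u‖) • u := by
  refine continuous_iff_continuousAt.2 fun u => ?_
  rcases eq_or_ne u 0 with rfl | hu
  · have hbound : ∀ w : E, ‖(s ‖w‖ / ‖w‖) • w‖ ≤ |s ‖w‖| := fun w => by
      rcases eq_or_ne w 0 with rfl | hw
      · simp
      · rw [norm_smul, norm_div, norm_norm, div_mul_cancel₀ _ (norm_ne_zero_iff.2 hw),
          Real.norm_eq_abs]
    have hlim : Tendsto (fun w : E => |s ‖w‖|) (𝓝 0) (𝓝 0) := by
      simpa [hs0] using ((hs.comp continuous_norm).abs).tendsto (0 : E)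
    simpa [ContinuousAt] using squeeze_zero_norm hbound hlim
  · exact ((hs.comp continuous_norm).continuousAt.div continuous_norm.continuousAt
      (norm_ne_zero_iff.2 hu)).smul continuousAt_id

theorem continuous_geoFlow_norm {θ : ℝ → ℝ} (hθ : Continuous θ) (hθ0 : sin (θ 0) = 0) :
    Continuous fun p : ℝ³ × ℝ³ => geoFlow (θ ‖p.1‖) p := by
  have hsing : Continuous fun p : ℝ³ × ℝ³ => (sin (θ ‖p.1‖) / ‖p.1‖) • p.1 :=
    (continuous_smul_div_norm (continuous_sin.comp hθ) hθ0).comp continuous_fst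
  unfold geoFlow
  fun_prop

theorem modelDehnTwist_eq_geoFlow {g : ℝ → ℝ} (hg0 : g 0 = 1 / 2) :
    modelDehnTwist g = fun p => geoFlow (2 * π * g ‖p.1‖) p := by
  funext ⟨u, v⟩
  by_cases hu : u = 0
  · subst hu
    have hπ : 2 * π * g 0 = π := by rw [hg0]; ring
    simp [modelDehnTwist, geoFlow, hπ]
  · simp [modelDehnTwist, hu]

theorem geoFlow_mem_cotangentS2 (t : ℝ) {p : ℝ³ × ℝ³} (hp : p ∈ cotangentS2) (hu : p.1 ≠ 0) :
    geoFlow t p ∈ cotangentS2 := by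
  obtain ⟨u, v⟩ := p
  obtain ⟨huv, hv⟩ := hp
  have hn : ‖u‖ ≠ 0 := norm_ne_zero_iff.2 hu
  have hvu : inner ℝ v u = (0 : ℝ) := by rw [real_inner_comm]; exact huv
  refine ⟨?_, ?_⟩
  · simp only [geoFlow, inner_sub_left, inner_add_right, real_inner_smul_left,
      real_inner_smul_right, huv, hvu, real_inner_self_eq_norm_sq, hv]
    field_simp
    ring
  · have hperp : inner ℝ (cos t • v) ((sin t / ‖u‖) • u) = (0 : ℝ) := by
      simp only [real_inner_smul_left, real_inner_smul_right, hvu, mul_zero]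
    have hsq := norm_add_sq_eq_norm_sq_add_norm_sq_real hperp
    rw [norm_smul, norm_smul, hv, norm_div, norm_norm, div_mul_cancel₀ _ hn] at hsq
    have hone : ‖cos t • v + (sin t / ‖u‖) • u‖ ^ 2 = 1 := by
      rw [sq, hsq, mul_one, ← sq, ← sq, Real.norm_eq_abs, Real.norm_eq_abs, sq_abs, sq_abs,
        cos_sq_add_sin_sq]
    exact (pow_eq_one_iff_of_nonneg (norm_nonneg _) two_ne_zero).1 hone

/-- **The model Dehn twist extends continuously over the zero section.** If `g` is
continuous with `g 0 = 1/2`, then the twist is continuous on `T` (with the subspace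
topology) and maps `T` to `T`. -/
theorem modelDehnTwist_continuous (g : ℝ → ℝ) (hg : Continuous g) (hg0 : g 0 = 1 / 2) :
    ContinuousOn (modelDehnTwist g) cotangentS2 ∧
    Set.MapsTo (modelDehnTwist g) cotangentS2 cotangentS2 := by
  refine ⟨?_, fun p hp => ?_⟩
  · have hsin : sin (2 * π * g 0) = 0 := by
      rw [hg0, show 2 * π * (1 / 2) = π by ring, sin_pi]
    rw [modelDehnTwist_eq_geoFlow hg0]
    exact (continuous_geoFlow_norm (continuous_const.mul hg) hsin).continuousOn
  · by_cases hu : p.1 = 0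
    · simpa [modelDehnTwist, hu, cotangentS2] using hp.2
    · rw [modelDehnTwist, if_neg hu]
      exact geoFlow_mem_cotangentS2 _ hp hu
end

section
/- Let K be a field. The subset Λ of the field of Hahn series HahnSeries ℝ K consisting of those series f whose support {d ∈ ℝ : coefficient of f at d is nonzero} has finite intersection with (−∞, D] for every D ∈ ℝ, is a subfield: it contains 0 and 1 and is closed under addition, negation, multiplication, and multiplicative inverse. (Thus the universal Novikov field over K is a field.) -/
/-!
A product has support in the sum of the supports, and the sum of two sets that meet every ray
`(-∞, D]` in a finite set again does so, since both are bounded below. The inverse of a nonzero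
Hahn series is a monomial times `∑ₙ uⁿ` with `u` of positive order `ε`; the support of `uⁿ` lies
above `n • ε`, so by the Archimedean property only finitely many `uⁿ` reach below a given `D`.
-/

/-- The universal Novikov field over `K`, as the set of Hahn series over `ℝ` whose support
meets every ray `(-∞, D]` in a finite set. -/
def NovikovSet (K : Type*) [Field K] : Set (HahnSeries ℝ K) :=
  {f | ∀ D : ℝ, (f.support ∩ Set.Iic D).Finite}

open Set Pointwise

namespace Set

variable {Γ : Type*}

def IsLeftFinite [Preorder Γ] (s : Set Γ) : Prop :=
  ∀ D, (s ∩ Iic D).Finite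

section Preorder

variable [Preorder Γ] {s t : Set Γ}

theorem IsLeftFinite.subset (ht : t.IsLeftFinite) (hst : s ⊆ t) : s.IsLeftFinite :=
  fun D => (ht D).subset (inter_subset_inter_left _ hst)

theorem Finite.isLeftFinite (hs : s.Finite) : s.IsLeftFinite :=
  fun _ => hs.inter_of_left _

theorem IsLeftFinite.union (hs : s.IsLeftFinite) (ht : t.IsLeftFinite) :
    (s ∪ t).IsLeftFinite := fun D => by
  rw [union_inter_distrib_right]
  exact (hs D).union (ht D)

end Preorder

theorem IsLeftFinite.bddBelow [LinearOrder Γ] [Nonempty Γ] {s : Set Γ} (hs : s.IsLeftFinite) :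
    BddBelow s := by
  obtain ⟨d⟩ := ‹Nonempty Γ›
  exact ((hs d).bddBelow.union bddBelow_Ioi).mono fun x hx =>
    (le_or_gt x d).imp (fun h => ⟨hx, h⟩) id

section OrderedGroup

variable [AddCommGroup Γ] [LinearOrder Γ] [IsOrderedAddMonoid Γ] {s t : Set Γ}

theorem IsLeftFinite.add (hs : s.IsLeftFinite) (ht : t.IsLeftFinite) :
    (s + t).IsLeftFinite := by
  obtain ⟨a, ha⟩ := hs.bddBelow
  obtain ⟨b, hb⟩ := ht.bddBelow
  intro D
  refine ((hs (D - b)).add (ht (D - a))).subset ?_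
  rintro _ ⟨⟨x, hx, y, hy, rfl⟩, hxy⟩
  refine ⟨x, ⟨hx, le_sub_iff_add_le.mpr ?_⟩, y, ⟨hy, le_sub_iff_add_le'.mpr ?_⟩, rfl⟩
  · exact (add_le_add_right (hb hy) x).trans hxy
  · exact (add_le_add_left (ha hx) y).trans hxy

theorem isLeftFinite_iUnion_of_nsmul_le [Archimedean Γ] {s : ℕ → Set Γ}
    (hs : ∀ n, (s n).IsLeftFinite) {ε : Γ} (hε : 0 < ε) (hle : ∀ n, ∀ x ∈ s n, n • ε ≤ x) :
    (⋃ n, s n).IsLeftFinite := by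
  intro D
  obtain ⟨N, hN⟩ := exists_lt_nsmul hε D
  refine ((finite_lt_nat N).biUnion fun n _ => hs n D).subset ?_
  rintro x ⟨hx, hxD⟩
  obtain ⟨n, hn⟩ := mem_iUnion.mp hx
  have hnN : n < N := by
    by_contra! hNn
    exact (hxD.trans_lt hN).not_ge ((nsmul_le_nsmul_left hε.le hNn).trans (hle n x hn))
  exact mem_biUnion hnN ⟨hn, hxD⟩

end OrderedGroup

end Set

namespace HahnSeries

variable {Γ R : Type*}

theorem isLeftFinite_support_single [PartialOrder Γ] [Zero R] (a : Γ) (r : R) :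
    (single a r).support.IsLeftFinite :=
  ((finite_singleton a).subset support_single_subset).isLeftFinite

variable [AddCommGroup Γ] [LinearOrder Γ] [IsOrderedAddMonoid Γ]

theorem isLeftFinite_support_mul [NonUnitalNonAssocSemiring R] {f g : HahnSeries Γ R} (hf : f.support.IsLeftFinite)
    (hg : g.support.IsLeftFinite) : (f * g).support.IsLeftFinite :=
  (hf.add hg).subset support_mul_subset

variable (Γ R) in
def novikovSubring [Ring R] : Subring (HahnSeries Γ R) where
  carrier := {f | f.support.IsLeftFinite}
  zero_mem' := by simp [Set.IsLeftFinite]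
  one_mem' := isLeftFinite_support_single 0 1
  add_mem' hf hg := (hf.union hg).subset (support_add_subset _ _)
  neg_mem' hf := by simpa only [mem_ofPred_eq, support_neg] using hf
  mul_mem' := isLeftFinite_support_mul

theorem isLeftFinite_iUnion_support_pow [Archimedean Γ] [Ring R] {u : HahnSeries Γ R}
    (hu : u ∈ novikovSubring Γ R) (hpos : 0 < u.orderTop) :
    (⋃ n : ℕ, (u ^ n).support).IsLeftFinite := by
  rcases eq_or_ne u 0 with rfl | hu0
  · refine (finite_singleton 0).isLeftFinite.subset (iUnion_subset fun n => ?_)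
    rcases n with _ | n
    · rw [pow_zero, ← single_zero_one]
      exact support_single_subset
    · simp
  refine isLeftFinite_iUnion_of_nsmul_le (pow_mem hu) ((zero_lt_orderTop_iff hu0).mp hpos)
    fun n x hx => ?_
  have hle : ((n • u.order : Γ) : WithTop Γ) ≤ x := by
    rw [WithTop.coe_nsmul, order_eq_orderTop_of_ne_zero hu0]
    exact orderTop_nsmul_le_orderTop_pow.trans (orderTop_le_of_coeff_ne_zero hx)
  exact_mod_cast hle

theorem inv_mem_novikovSubring [Archimedean Γ] [Field R] {f : HahnSeries Γ R}
    (hf : f ∈ novikovSubring Γ R) : f⁻¹ ∈ novikovSubring Γ R := by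
  rcases eq_or_ne f 0 with rfl | hf0
  · simp
  set s := single (-f.order) f.leadingCoeff⁻¹
  have hs : s ∈ novikovSubring Γ R := isLeftFinite_support_single _ _
  have hu : 0 < (1 - s * f).orderTop :=
    unit_aux f (inv_mul_cancel₀ (leadingCoeff_ne_zero.mpr hf0)) _ (neg_add_cancel f.order)
  rw [inv_def]
  refine mul_mem hs ?_
  refine (isLeftFinite_iUnion_support_pow (sub_mem (one_mem _) (mul_mem hs hf)) hu).subset ?_
  rw [← SummableFamily.coe_powers hu]
  exact SummableFamily.support_hsum_subset

variable (Γ R) in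
def novikovSubfield [Archimedean Γ] [Field R] : Subfield (HahnSeries Γ R) :=
  { novikovSubring Γ R with inv_mem' := fun _ => inv_mem_novikovSubring }

end HahnSeries

/-- **The universal Novikov field is a subfield of the Hahn series field:** it contains
`0` and `1` and is closed under addition, negation, multiplication and inversion. -/
theorem novikov_is_subfield (K : Type*) [Field K] :
    (0 : HahnSeries ℝ K) ∈ NovikovSet K ∧
    (1 : HahnSeries ℝ K) ∈ NovikovSet K ∧
    (∀ f ∈ NovikovSet K, ∀ g ∈ NovikovSet K, f + g ∈ NovikovSet K) ∧
    (∀ f ∈ NovikovSet K, -f ∈ NovikovSet K) ∧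
    (∀ f ∈ NovikovSet K, ∀ g ∈ NovikovSet K, f * g ∈ NovikovSet K) ∧
    (∀ f ∈ NovikovSet K, f⁻¹ ∈ NovikovSet K) := by
  have hΛ : NovikovSet K = HahnSeries.novikovSubfield ℝ K := rfl
  simp only [hΛ, SetLike.mem_coe]
  exact ⟨zero_mem _, one_mem _, fun _ hf _ hg => add_mem hf hg, fun _ hf => neg_mem hf,
    fun _ hf _ hg => mul_mem hf hg, fun _ hf => inv_mem hf⟩
end

section
/- Fix an integer k with 5 ≤ k ≤ 8. On ℤ^{k+1} with bilinear form ⟨x,y⟩ = x₀y₀ − Σ_{i=1}^{k} x_i y_i and K = (−3,1,…,1), the set ℰ = {A ∈ ℤ^{k+1} : ⟨A,A⟩ = −1 and ⟨A,K⟩ = −1} is finite, and for all x, y, z ∈ ℚ^{k+1} with ⟨x,K⟩ = ⟨y,K⟩ = ⟨z,K⟩ = 0 one has Σ_{A ∈ ℰ} ⟨x,A⟩·⟨y,A⟩·⟨A,z⟩ = 0 (the form being extended ℚ-bilinearly). Equivalently, for x, y orthogonal to K the element x ∗₁ y = Σ_{A∈ℰ} ⟨x,A⟩⟨y,A⟩·A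 is a rational multiple of K. -/
set_option maxHeartbeats 1000000
set_option maxRecDepth 16000

/-- The intersection form of `CP² # k·(CP²-bar)` on `ℤ^{k+1}`. -/
def interFormZ (k : ℕ) (x y : Fin (k + 1) → ℤ) : ℤ :=
  x 0 * y 0 - ∑ i : Fin k, x i.succ * y i.succ

/-- The intersection form extended `ℚ`-bilinearly. -/
def interFormQ (k : ℕ) (x y : Fin (k + 1) → ℚ) : ℚ :=
  x 0 * y 0 - ∑ i : Fin k, x i.succ * y i.succ

/-- The canonical class `K = (−3,1,…,1)` over `ℤ`. -/
def canClassZ (k : ℕ) : Fin (k + 1) → ℤ := fun i => if i = 0 then -3 else 1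

/-- The canonical class `K = (−3,1,…,1)` over `ℚ`. -/
def canClassQ (k : ℕ) : Fin (k + 1) → ℚ := fun i => if i = 0 then -3 else 1

/-- The set of exceptional classes `ℰ = {A : ⟨A,A⟩ = −1, ⟨A,K⟩ = −1}`. -/
def excClasses (k : ℕ) : Set (Fin (k + 1) → ℤ) :=
  {A | interFormZ k A A = -1 ∧ interFormZ k A (canClassZ k) = -1}

/-- Coefficientwise inclusion `ℤ^{k+1} → ℚ^{k+1}`. -/
def toQ {k : ℕ} (A : Fin (k + 1) → ℤ) : Fin (k + 1) → ℚ := fun i => (A i : ℚ)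

lemma exc_expand {k : ℕ} {A : Fin (k+1) → ℤ} (h : A ∈ excClasses k) :
    (∑ i : Fin k, (A i.succ)^2 = (A 0)^2 + 1) ∧ (∑ i : Fin k, A i.succ = 1 - 3 * A 0) := by
  obtain ⟨h1, h2⟩ := h
  simp only [interFormZ, canClassZ] at h1 h2
  rw [Finset.sum_congr rfl (fun i _ => by rw [if_neg (Fin.succ_ne_zero i)])] at h2
  have h2' : A 0 * (-3) - ∑ i : Fin k, A i.succ = -1 := by simpa using h2
  constructor
  · rw [Finset.sum_congr rfl (fun i _ => sq (A i.succ))]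
    nlinarith [h1]
  · linarith

lemma excClasses_finite (k : ℕ) (hk8 : k ≤ 8) : (excClasses k).Finite := by
  apply Set.Finite.subset (Set.Finite.pi' (t := fun _ : Fin (k+1) => Set.Icc (-8 : ℤ) 8)
    (fun _ => Set.finite_Icc _ _))
  intro A hA
  obtain ⟨hsq, hsum⟩ := exc_expand hA
  have hcs : (∑ i : Fin k, A i.succ)^2 ≤ (k : ℤ) * ∑ i : Fin k, (A i.succ)^2 := by
    have := sq_sum_le_card_mul_sum_sq (s := (Finset.univ : Finset (Fin k)))
      (f := fun i => A i.succ)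
    simpa using this
  rw [hsum, hsq] at hcs
  have hk : (k : ℤ) ≤ 8 := by exact_mod_cast hk8
  have hA0sq : (0:ℤ) ≤ (A 0)^2 + 1 := by positivity
  have hb : (1 - 3 * A 0)^2 ≤ 8 * ((A 0)^2 + 1) := le_trans hcs (by nlinarith)
  have h0 : -1 ≤ A 0 ∧ A 0 ≤ 7 := by constructor <;> nlinarith
  intro i
  rcases eq_or_ne i 0 with rfl | hi
  · exact ⟨by omega, by omega⟩
  · obtain ⟨j, rfl⟩ := Fin.eq_succ_of_ne_zero hi
    have hsle : (A j.succ)^2 ≤ ∑ i : Fin k, (A i.succ)^2 :=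
      Finset.single_le_sum (f := fun i => (A i.succ)^2) (fun _ _ => sq_nonneg _)
        (Finset.mem_univ j)
    rw [hsq] at hsle
    have : (A j.succ)^2 ≤ 50 := by nlinarith
    constructor <;> nlinarith

def invo (k : ℕ) (c : ℤ) (A : Fin (k + 1) → ℤ) : Fin (k + 1) → ℤ :=
  fun i => -A i - c * canClassZ k i

lemma iz_comm (k : ℕ) (x y : Fin (k+1) → ℤ) : interFormZ k x y = interFormZ k y x := by
  unfold interFormZ
  rw [mul_comm, Finset.sum_congr rfl (fun i _ => mul_comm (x i.succ) (y i.succ))]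

lemma iq_comm (k : ℕ) (x y : Fin (k+1) → ℚ) : interFormQ k x y = interFormQ k y x := by
  unfold interFormQ
  rw [mul_comm, Finset.sum_congr rfl (fun i _ => mul_comm (x i.succ) (y i.succ))]

lemma iz_KK (k : ℕ) : interFormZ k (canClassZ k) (canClassZ k) = 9 - k := by
  unfold interFormZ canClassZ
  rw [Finset.sum_congr rfl (fun i _ => by rw [if_neg (Fin.succ_ne_zero i)])]
  simp

lemma iz_invo_right (k : ℕ) (c : ℤ) (x A : Fin (k+1) → ℤ) :
    interFormZ k x (invo k c A)
      = -interFormZ k x A - c * interFormZ k x (canClassZ k) := by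
  unfold interFormZ invo
  rw [Finset.sum_congr rfl (fun i _ => show
      x i.succ * (-A i.succ - c * canClassZ k i.succ)
        = -(x i.succ * A i.succ) - c * (x i.succ * canClassZ k i.succ) from by ring),
    Finset.sum_sub_distrib, Finset.sum_neg_distrib, ← Finset.mul_sum]
  ring

lemma invo_mem {k : ℕ} {c : ℤ} (hc : c * (9 - (k:ℤ)) = 2) {A : Fin (k+1) → ℤ}
    (hA : A ∈ excClasses k) : invo k c A ∈ excClasses k := by
  obtain ⟨h1, h2⟩ := hA
  constructor
  · rw [iz_invo_right, iz_comm k (invo k c A) A, iz_invo_right,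
      iz_comm k (invo k c A) (canClassZ k), iz_invo_right,
      iz_comm k (canClassZ k) A, iz_KK, h1, h2]
    linear_combination c * hc
  · rw [iz_comm, iz_invo_right, iz_comm k (canClassZ k) A, iz_KK, h2]
    linear_combination -hc

lemma invo_invo (k : ℕ) (c : ℤ) (A : Fin (k+1) → ℤ) : invo k c (invo k c A) = A := by
  funext i; unfold invo; ring

lemma toQ_invo (k : ℕ) (c : ℤ) (A : Fin (k+1) → ℤ) :
    toQ (invo k c A) = fun i => -toQ A i - (c:ℚ) * canClassQ k i := by
  funext i
  by_cases h : i = 0 <;> simp [toQ, invo, canClassZ, canClassQ, h]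

lemma iq_invo_right (k : ℕ) (c : ℤ) (x : Fin (k+1) → ℚ) (A : Fin (k+1) → ℤ) :
    interFormQ k x (toQ (invo k c A))
      = -interFormQ k x (toQ A) - (c:ℚ) * interFormQ k x (canClassQ k) := by
  rw [toQ_invo]
  unfold interFormQ
  rw [Finset.sum_congr rfl (fun i _ => show
      x i.succ * (-toQ A i.succ - (c:ℚ) * canClassQ k i.succ)
        = -(x i.succ * toQ A i.succ) - (c:ℚ) * (x i.succ * canClassQ k i.succ) from by ring),
    Finset.sum_sub_distrib, Finset.sum_neg_distrib, ← Finset.mul_sum]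
  unfold toQ
  ring

lemma sum_eq_zero_of_invo (k : ℕ) (c : ℤ) (hk8 : k ≤ 8) (hc : c * (9 - (k:ℤ)) = 2)
    (hfp : ∀ A : Fin (k+1) → ℤ, A ∈ excClasses k → invo k c A ≠ A)
    (x y z : Fin (k + 1) → ℚ)
    (hx : interFormQ k x (canClassQ k) = 0) (hy : interFormQ k y (canClassQ k) = 0)
    (hz : interFormQ k z (canClassQ k) = 0) :
    (∑ᶠ A ∈ excClasses k,
        interFormQ k x (toQ A) * interFormQ k y (toQ A) * interFormQ k (toQ A) z) = 0 := by
  have hfin := excClasses_finite k hk8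
  rw [← Set.Finite.coe_toFinset hfin, finsum_mem_coe_finset]
  refine Finset.sum_involution (fun A _ => invo k c A) ?_ ?_ (fun A hA =>
    hfin.mem_toFinset.mpr (invo_mem hc (hfin.mem_toFinset.mp hA))) ?_
  · intro A hA
    have ex : interFormQ k x (toQ (invo k c A)) = -interFormQ k x (toQ A) := by
      rw [iq_invo_right, hx]; ring
    have ey : interFormQ k y (toQ (invo k c A)) = -interFormQ k y (toQ A) := by
      rw [iq_invo_right, hy]; ring
    have ez : interFormQ k (toQ (invo k c A)) z = -interFormQ k (toQ A) z := by
      rw [iq_comm, iq_invo_right, hz, iq_comm k z (toQ A)]; ring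
    rw [ex, ey, ez]; ring
  · intro A hA _
    exact hfp A (hfin.mem_toFinset.mp hA)
  · intro A hA
    exact invo_invo k c A

def L5 : List (Fin 6 → ℤ) :=
  [![0,0,0,0,0,1],
   ![0,0,0,0,1,0],
   ![0,0,0,1,0,0],
   ![0,0,1,0,0,0],
   ![0,1,0,0,0,0],
   ![1,-1,-1,0,0,0],
   ![1,-1,0,-1,0,0],
   ![1,-1,0,0,-1,0],
   ![1,-1,0,0,0,-1],
   ![1,0,-1,-1,0,0],
   ![1,0,-1,0,-1,0],
   ![1,0,-1,0,0,-1],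
   ![1,0,0,-1,-1,0],
   ![1,0,0,-1,0,-1],
   ![1,0,0,0,-1,-1],
   ![2,-1,-1,-1,-1,-1]]

lemma mem5 (A : Fin 6 → ℤ) : A ∈ excClasses 5 ↔ A ∈ L5 := by
 constructor
 · intro hA
   obtain ⟨a0, a1, a2, a3, a4, a5, rfl⟩ : ∃ a0 a1 a2 a3 a4 a5, A = ![a0,a1,a2,a3,a4,a5] :=
     ⟨A 0, A 1, A 2, A 3, A 4, A 5, by funext i; fin_cases i <;> rfl⟩
   obtain ⟨h1, h2⟩ := hA
   simp only [interFormZ, canClassZ, Fin.sum_univ_succ, Fin.sum_univ_zero,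
     Matrix.cons_val_zero, Matrix.cons_val_succ, Fin.succ_ne_zero, if_false,
     ne_eq, if_true, reduceIte, mul_one, add_zero] at h1 h2
   have H1 : a1*a1+a2*a2+a3*a3+a4*a4+a5*a5 = a0*a0+1 := by linarith
   have H2 : a1+a2+a3+a4+a5 = 1-3*a0 := by linarith
   clear h1 h2
   have hnn : ∀ n : ℤ, 0 ≤ n * (n-1) := fun n => by rcases le_or_gt n 0 with h | h <;> nlinarith
   have hq : (2*a0+1)*(a0-2) ≤ 0 := by nlinarith [sq_nonneg (a1-a2), sq_nonneg (a1-a3), sq_nonneg (a1-a4), sq_nonneg (a1-a5), sq_nonneg (a2-a3), sq_nonneg (a2-a4), sq_nonneg (a2-a5), sq_nonneg (a3-a4), sq_nonneg (a3-a5), sq_nonneg (a4-a5)]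
   have hlo : 0 ≤ a0 := by
     by_contra hh
     push_neg at hh
     have h' : a0 ≤ -1 := by omega
     nlinarith [hq, sq_nonneg a0]
   have hhi : a0 ≤ 2 := by
     by_contra hh
     push_neg at hh
     have h' : 3 ≤ a0 := by omega
     nlinarith [hq, sq_nonneg (a0-3)]
   have ha0 : a0 = 0 ∨ a0 = 1 ∨ a0 = 2 := by omega
   clear hq hlo hhi
   rcases ha0 with rfl | rfl | rfl
   · -- a0 = 0, shift t = 0
     have q1 : (a1+0) * (a1+0-1) = 0 := by nlinarith [hnn (a1+0), hnn (a2+0), hnn (a3+0), hnn (a4+0), hnn (a5+0)]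
     have q2 : (a2+0) * (a2+0-1) = 0 := by nlinarith [hnn (a1+0), hnn (a2+0), hnn (a3+0), hnn (a4+0), hnn (a5+0)]
     have q3 : (a3+0) * (a3+0-1) = 0 := by nlinarith [hnn (a1+0), hnn (a2+0), hnn (a3+0), hnn (a4+0), hnn (a5+0)]
     have q4 : (a4+0) * (a4+0-1) = 0 := by nlinarith [hnn (a1+0), hnn (a2+0), hnn (a3+0), hnn (a4+0), hnn (a5+0)]
     have q5 : (a5+0) * (a5+0-1) = 0 := by nlinarith [hnn (a1+0), hnn (a2+0), hnn (a3+0), hnn (a4+0), hnn (a5+0)]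
     have e1 : a1 = 0 ∨ a1 = 1 := by rcases mul_eq_zero.mp q1 with h | h <;> omega
     have e2 : a2 = 0 ∨ a2 = 1 := by rcases mul_eq_zero.mp q2 with h | h <;> omega
     have e3 : a3 = 0 ∨ a3 = 1 := by rcases mul_eq_zero.mp q3 with h | h <;> omega
     have e4 : a4 = 0 ∨ a4 = 1 := by rcases mul_eq_zero.mp q4 with h | h <;> omega
     have e5 : a5 = 0 ∨ a5 = 1 := by rcases mul_eq_zero.mp q5 with h | h <;> omega
     rcases e1 with rfl | rfl <;> rcases e2 with rfl | rfl <;> rcases e3 with rfl | rfl <;> rcases e4 with rfl | rfl <;> rcases e5 with rfl | rfl <;>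
       first | (exfalso; omega) | decide
   · -- a0 = 1, shift t = 1
     have q1 : (a1+1) * (a1+1-1) = 0 := by nlinarith [hnn (a1+1), hnn (a2+1), hnn (a3+1), hnn (a4+1), hnn (a5+1)]
     have q2 : (a2+1) * (a2+1-1) = 0 := by nlinarith [hnn (a1+1), hnn (a2+1), hnn (a3+1), hnn (a4+1), hnn (a5+1)]
     have q3 : (a3+1) * (a3+1-1) = 0 := by nlinarith [hnn (a1+1), hnn (a2+1), hnn (a3+1), hnn (a4+1), hnn (a5+1)]
     have q4 : (a4+1) * (a4+1-1) = 0 := by nlinarith [hnn (a1+1), hnn (a2+1), hnn (a3+1), hnn (a4+1), hnn (a5+1)]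
     have q5 : (a5+1) * (a5+1-1) = 0 := by nlinarith [hnn (a1+1), hnn (a2+1), hnn (a3+1), hnn (a4+1), hnn (a5+1)]
     have e1 : a1 = -1 ∨ a1 = 0 := by rcases mul_eq_zero.mp q1 with h | h <;> omega
     have e2 : a2 = -1 ∨ a2 = 0 := by rcases mul_eq_zero.mp q2 with h | h <;> omega
     have e3 : a3 = -1 ∨ a3 = 0 := by rcases mul_eq_zero.mp q3 with h | h <;> omega
     have e4 : a4 = -1 ∨ a4 = 0 := by rcases mul_eq_zero.mp q4 with h | h <;> omega
     have e5 : a5 = -1 ∨ a5 = 0 := by rcases mul_eq_zero.mp q5 with h | h <;> omega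
     rcases e1 with rfl | rfl <;> rcases e2 with rfl | rfl <;> rcases e3 with rfl | rfl <;> rcases e4 with rfl | rfl <;> rcases e5 with rfl | rfl <;>
       first | (exfalso; omega) | decide
   · -- a0 = 2, shift t = 2
     have q1 : (a1+2) * (a1+2-1) = 0 := by nlinarith [hnn (a1+2), hnn (a2+2), hnn (a3+2), hnn (a4+2), hnn (a5+2)]
     have q2 : (a2+2) * (a2+2-1) = 0 := by nlinarith [hnn (a1+2), hnn (a2+2), hnn (a3+2), hnn (a4+2), hnn (a5+2)]
     have q3 : (a3+2) * (a3+2-1) = 0 := by nlinarith [hnn (a1+2), hnn (a2+2), hnn (a3+2), hnn (a4+2), hnn (a5+2)]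
     have q4 : (a4+2) * (a4+2-1) = 0 := by nlinarith [hnn (a1+2), hnn (a2+2), hnn (a3+2), hnn (a4+2), hnn (a5+2)]
     have q5 : (a5+2) * (a5+2-1) = 0 := by nlinarith [hnn (a1+2), hnn (a2+2), hnn (a3+2), hnn (a4+2), hnn (a5+2)]
     have e1 : a1 = -2 ∨ a1 = -1 := by rcases mul_eq_zero.mp q1 with h | h <;> omega
     have e2 : a2 = -2 ∨ a2 = -1 := by rcases mul_eq_zero.mp q2 with h | h <;> omega
     have e3 : a3 = -2 ∨ a3 = -1 := by rcases mul_eq_zero.mp q3 with h | h <;> omega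
     have e4 : a4 = -2 ∨ a4 = -1 := by rcases mul_eq_zero.mp q4 with h | h <;> omega
     have e5 : a5 = -2 ∨ a5 = -1 := by rcases mul_eq_zero.mp q5 with h | h <;> omega
     rcases e1 with rfl | rfl <;> rcases e2 with rfl | rfl <;> rcases e3 with rfl | rfl <;> rcases e4 with rfl | rfl <;> rcases e5 with rfl | rfl <;>
       first | (exfalso; omega) | decide
 · intro h
   fin_cases h <;> exact ⟨by decide, by decide⟩


lemma sum5 (x y z : Fin 6 → ℚ)
    (hx : interFormQ 5 x (canClassQ 5) = 0) (hy : interFormQ 5 y (canClassQ 5) = 0)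
    (hz : interFormQ 5 z (canClassQ 5) = 0) :
    (∑ᶠ A ∈ excClasses 5,
        interFormQ 5 x (toQ A) * interFormQ 5 y (toQ A) * interFormQ 5 (toQ A) z) = 0 := by
  have hset : excClasses 5 = ↑(L5.toFinset) := Set.ext fun A => by
    rw [Finset.mem_coe, List.mem_toFinset]; exact mem5 A
  rw [hset, finsum_mem_coe_finset, List.sum_toFinset _ (by decide : L5.Nodup)]
  simp only [L5, List.map_cons, List.map_nil, List.sum_cons, List.sum_nil]
  simp only [interFormQ, toQ, Fin.sum_univ_succ, Fin.sum_univ_zero, Matrix.cons_val_zero,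
    Matrix.cons_val_succ, add_zero]
  simp only [show Fin.succ (0 : Fin 1) = (1 : Fin 2) from rfl,
    show Fin.succ (0 : Fin 2) = (1 : Fin 3) from rfl,
    show Fin.succ (1 : Fin 2) = (2 : Fin 3) from rfl,
    show Fin.succ (0 : Fin 3) = (1 : Fin 4) from rfl,
    show Fin.succ (1 : Fin 3) = (2 : Fin 4) from rfl,
    show Fin.succ (2 : Fin 3) = (3 : Fin 4) from rfl,
    show Fin.succ (0 : Fin 4) = (1 : Fin 5) from rfl,
    show Fin.succ (1 : Fin 4) = (2 : Fin 5) from rfl,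
    show Fin.succ (2 : Fin 4) = (3 : Fin 5) from rfl,
    show Fin.succ (3 : Fin 4) = (4 : Fin 5) from rfl,
    show Fin.succ (0 : Fin 5) = (1 : Fin 6) from rfl,
    show Fin.succ (1 : Fin 5) = (2 : Fin 6) from rfl,
    show Fin.succ (2 : Fin 5) = (3 : Fin 6) from rfl,
    show Fin.succ (3 : Fin 5) = (4 : Fin 6) from rfl,
    show Fin.succ (4 : Fin 5) = (5 : Fin 6) from rfl]
  simp only [interFormQ, canClassQ, Fin.sum_univ_succ, Fin.sum_univ_zero, Fin.succ_ne_zero,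
    ne_eq, if_false, reduceIte, add_zero, mul_one, if_true,
    show Fin.succ (0 : Fin 1) = (1 : Fin 2) from rfl,
    show Fin.succ (0 : Fin 2) = (1 : Fin 3) from rfl,
    show Fin.succ (1 : Fin 2) = (2 : Fin 3) from rfl,
    show Fin.succ (0 : Fin 3) = (1 : Fin 4) from rfl,
    show Fin.succ (1 : Fin 3) = (2 : Fin 4) from rfl,
    show Fin.succ (2 : Fin 3) = (3 : Fin 4) from rfl,
    show Fin.succ (0 : Fin 4) = (1 : Fin 5) from rfl,
    show Fin.succ (1 : Fin 4) = (2 : Fin 5) from rfl,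
    show Fin.succ (2 : Fin 4) = (3 : Fin 5) from rfl,
    show Fin.succ (3 : Fin 4) = (4 : Fin 5) from rfl,
    show Fin.succ (0 : Fin 5) = (1 : Fin 6) from rfl,
    show Fin.succ (1 : Fin 5) = (2 : Fin 6) from rfl,
    show Fin.succ (2 : Fin 5) = (3 : Fin 6) from rfl,
    show Fin.succ (3 : Fin 5) = (4 : Fin 6) from rfl,
    show Fin.succ (4 : Fin 5) = (5 : Fin 6) from rfl] at hx hy hz
  push_cast
  linear_combination ((1:ℚ) * (y 0 * z 0 - (y 1 * z 1 + y 2 * z 2 + y 3 * z 3 + y 4 * z 4 + y 5 * z 5)) + (-1:ℚ) * ((-3) * y 0 - (y 1 + y 2 + y 3 + y 4 + y 5)) * ((-3) * z 0 - (z 1 + z 2 + z 3 + z 4 + z 5))) * hx + ((1:ℚ) * (x 0 * z 0 - (x 1 * z 1 + x 2 * z 2 + x 3 * z 3 + x 4 * z 4 + x 5 * z 5))) * hy + ((1:ℚ) * (x 0 * y 0 - (x 1 * y 1 + x 2 * y 2 + x 3 * y 3 + x 4 * y 4 + x 5 * y 5))) * hz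

def L6 : List (Fin 7 → ℤ) :=
  [![0,0,0,0,0,0,1],
   ![0,0,0,0,0,1,0],
   ![0,0,0,0,1,0,0],
   ![0,0,0,1,0,0,0],
   ![0,0,1,0,0,0,0],
   ![0,1,0,0,0,0,0],
   ![1,-1,-1,0,0,0,0],
   ![1,-1,0,-1,0,0,0],
   ![1,-1,0,0,-1,0,0],
   ![1,-1,0,0,0,-1,0],
   ![1,-1,0,0,0,0,-1],
   ![1,0,-1,-1,0,0,0],
   ![1,0,-1,0,-1,0,0],
   ![1,0,-1,0,0,-1,0],
   ![1,0,-1,0,0,0,-1],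
   ![1,0,0,-1,-1,0,0],
   ![1,0,0,-1,0,-1,0],
   ![1,0,0,-1,0,0,-1],
   ![1,0,0,0,-1,-1,0],
   ![1,0,0,0,-1,0,-1],
   ![1,0,0,0,0,-1,-1],
   ![2,-1,-1,-1,-1,-1,0],
   ![2,-1,-1,-1,-1,0,-1],
   ![2,-1,-1,-1,0,-1,-1],
   ![2,-1,-1,0,-1,-1,-1],
   ![2,-1,0,-1,-1,-1,-1],
   ![2,0,-1,-1,-1,-1,-1]]

lemma mem6 (A : Fin 7 → ℤ) : A ∈ excClasses 6 ↔ A ∈ L6 := by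
 constructor
 · intro hA
   obtain ⟨a0, a1, a2, a3, a4, a5, a6, rfl⟩ : ∃ a0 a1 a2 a3 a4 a5 a6, A = ![a0,a1,a2,a3,a4,a5,a6] :=
     ⟨A 0, A 1, A 2, A 3, A 4, A 5, A 6, by funext i; fin_cases i <;> rfl⟩
   obtain ⟨h1, h2⟩ := hA
   simp only [interFormZ, canClassZ, Fin.sum_univ_succ, Fin.sum_univ_zero,
     Matrix.cons_val_zero, Matrix.cons_val_succ, Fin.succ_ne_zero, if_false,
     ne_eq, if_true, reduceIte, mul_one, add_zero] at h1 h2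
   have H1 : a1*a1+a2*a2+a3*a3+a4*a4+a5*a5+a6*a6 = a0*a0+1 := by linarith
   have H2 : a1+a2+a3+a4+a5+a6 = 1-3*a0 := by linarith
   clear h1 h2
   have hnn : ∀ n : ℤ, 0 ≤ n * (n-1) := fun n => by rcases le_or_gt n 0 with h | h <;> nlinarith
   have hq : 3*a0*a0-6*a0-5 ≤ 0 := by nlinarith [sq_nonneg (a1-a2), sq_nonneg (a1-a3), sq_nonneg (a1-a4), sq_nonneg (a1-a5), sq_nonneg (a1-a6), sq_nonneg (a2-a3), sq_nonneg (a2-a4), sq_nonneg (a2-a5), sq_nonneg (a2-a6), sq_nonneg (a3-a4), sq_nonneg (a3-a5), sq_nonneg (a3-a6), sq_nonneg (a4-a5), sq_nonneg (a4-a6), sq_nonneg (a5-a6)]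
   have hlo : 0 ≤ a0 := by
     by_contra hh
     push_neg at hh
     have h' : a0 ≤ -1 := by omega
     nlinarith [hq, sq_nonneg a0]
   have hhi : a0 ≤ 2 := by
     by_contra hh
     push_neg at hh
     have h' : 3 ≤ a0 := by omega
     nlinarith [hq, sq_nonneg (a0-3)]
   have ha0 : a0 = 0 ∨ a0 = 1 ∨ a0 = 2 := by omega
   clear hq hlo hhi
   rcases ha0 with rfl | rfl | rfl
   · -- a0 = 0, shift t = 0
     have q1 : (a1+0) * (a1+0-1) = 0 := by nlinarith [hnn (a1+0), hnn (a2+0), hnn (a3+0), hnn (a4+0), hnn (a5+0), hnn (a6+0)]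
     have q2 : (a2+0) * (a2+0-1) = 0 := by nlinarith [hnn (a1+0), hnn (a2+0), hnn (a3+0), hnn (a4+0), hnn (a5+0), hnn (a6+0)]
     have q3 : (a3+0) * (a3+0-1) = 0 := by nlinarith [hnn (a1+0), hnn (a2+0), hnn (a3+0), hnn (a4+0), hnn (a5+0), hnn (a6+0)]
     have q4 : (a4+0) * (a4+0-1) = 0 := by nlinarith [hnn (a1+0), hnn (a2+0), hnn (a3+0), hnn (a4+0), hnn (a5+0), hnn (a6+0)]
     have q5 : (a5+0) * (a5+0-1) = 0 := by nlinarith [hnn (a1+0), hnn (a2+0), hnn (a3+0), hnn (a4+0), hnn (a5+0), hnn (a6+0)]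
     have q6 : (a6+0) * (a6+0-1) = 0 := by nlinarith [hnn (a1+0), hnn (a2+0), hnn (a3+0), hnn (a4+0), hnn (a5+0), hnn (a6+0)]
     have e1 : a1 = 0 ∨ a1 = 1 := by rcases mul_eq_zero.mp q1 with h | h <;> omega
     have e2 : a2 = 0 ∨ a2 = 1 := by rcases mul_eq_zero.mp q2 with h | h <;> omega
     have e3 : a3 = 0 ∨ a3 = 1 := by rcases mul_eq_zero.mp q3 with h | h <;> omega
     have e4 : a4 = 0 ∨ a4 = 1 := by rcases mul_eq_zero.mp q4 with h | h <;> omega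
     have e5 : a5 = 0 ∨ a5 = 1 := by rcases mul_eq_zero.mp q5 with h | h <;> omega
     have e6 : a6 = 0 ∨ a6 = 1 := by rcases mul_eq_zero.mp q6 with h | h <;> omega
     rcases e1 with rfl | rfl <;> rcases e2 with rfl | rfl <;> rcases e3 with rfl | rfl <;> rcases e4 with rfl | rfl <;> rcases e5 with rfl | rfl <;> rcases e6 with rfl | rfl <;>
       first | (exfalso; omega) | decide
   · -- a0 = 1, shift t = 1
     have q1 : (a1+1) * (a1+1-1) = 0 := by nlinarith [hnn (a1+1), hnn (a2+1), hnn (a3+1), hnn (a4+1), hnn (a5+1), hnn (a6+1)]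
     have q2 : (a2+1) * (a2+1-1) = 0 := by nlinarith [hnn (a1+1), hnn (a2+1), hnn (a3+1), hnn (a4+1), hnn (a5+1), hnn (a6+1)]
     have q3 : (a3+1) * (a3+1-1) = 0 := by nlinarith [hnn (a1+1), hnn (a2+1), hnn (a3+1), hnn (a4+1), hnn (a5+1), hnn (a6+1)]
     have q4 : (a4+1) * (a4+1-1) = 0 := by nlinarith [hnn (a1+1), hnn (a2+1), hnn (a3+1), hnn (a4+1), hnn (a5+1), hnn (a6+1)]
     have q5 : (a5+1) * (a5+1-1) = 0 := by nlinarith [hnn (a1+1), hnn (a2+1), hnn (a3+1), hnn (a4+1), hnn (a5+1), hnn (a6+1)]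
     have q6 : (a6+1) * (a6+1-1) = 0 := by nlinarith [hnn (a1+1), hnn (a2+1), hnn (a3+1), hnn (a4+1), hnn (a5+1), hnn (a6+1)]
     have e1 : a1 = -1 ∨ a1 = 0 := by rcases mul_eq_zero.mp q1 with h | h <;> omega
     have e2 : a2 = -1 ∨ a2 = 0 := by rcases mul_eq_zero.mp q2 with h | h <;> omega
     have e3 : a3 = -1 ∨ a3 = 0 := by rcases mul_eq_zero.mp q3 with h | h <;> omega
     have e4 : a4 = -1 ∨ a4 = 0 := by rcases mul_eq_zero.mp q4 with h | h <;> omega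
     have e5 : a5 = -1 ∨ a5 = 0 := by rcases mul_eq_zero.mp q5 with h | h <;> omega
     have e6 : a6 = -1 ∨ a6 = 0 := by rcases mul_eq_zero.mp q6 with h | h <;> omega
     rcases e1 with rfl | rfl <;> rcases e2 with rfl | rfl <;> rcases e3 with rfl | rfl <;> rcases e4 with rfl | rfl <;> rcases e5 with rfl | rfl <;> rcases e6 with rfl | rfl <;>
       first | (exfalso; omega) | decide
   · -- a0 = 2, shift t = 1
     have q1 : (a1+1) * (a1+1-1) = 0 := by nlinarith [hnn (a1+1), hnn (a2+1), hnn (a3+1), hnn (a4+1), hnn (a5+1), hnn (a6+1)]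
     have q2 : (a2+1) * (a2+1-1) = 0 := by nlinarith [hnn (a1+1), hnn (a2+1), hnn (a3+1), hnn (a4+1), hnn (a5+1), hnn (a6+1)]
     have q3 : (a3+1) * (a3+1-1) = 0 := by nlinarith [hnn (a1+1), hnn (a2+1), hnn (a3+1), hnn (a4+1), hnn (a5+1), hnn (a6+1)]
     have q4 : (a4+1) * (a4+1-1) = 0 := by nlinarith [hnn (a1+1), hnn (a2+1), hnn (a3+1), hnn (a4+1), hnn (a5+1), hnn (a6+1)]
     have q5 : (a5+1) * (a5+1-1) = 0 := by nlinarith [hnn (a1+1), hnn (a2+1), hnn (a3+1), hnn (a4+1), hnn (a5+1), hnn (a6+1)]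
     have q6 : (a6+1) * (a6+1-1) = 0 := by nlinarith [hnn (a1+1), hnn (a2+1), hnn (a3+1), hnn (a4+1), hnn (a5+1), hnn (a6+1)]
     have e1 : a1 = -1 ∨ a1 = 0 := by rcases mul_eq_zero.mp q1 with h | h <;> omega
     have e2 : a2 = -1 ∨ a2 = 0 := by rcases mul_eq_zero.mp q2 with h | h <;> omega
     have e3 : a3 = -1 ∨ a3 = 0 := by rcases mul_eq_zero.mp q3 with h | h <;> omega
     have e4 : a4 = -1 ∨ a4 = 0 := by rcases mul_eq_zero.mp q4 with h | h <;> omega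
     have e5 : a5 = -1 ∨ a5 = 0 := by rcases mul_eq_zero.mp q5 with h | h <;> omega
     have e6 : a6 = -1 ∨ a6 = 0 := by rcases mul_eq_zero.mp q6 with h | h <;> omega
     rcases e1 with rfl | rfl <;> rcases e2 with rfl | rfl <;> rcases e3 with rfl | rfl <;> rcases e4 with rfl | rfl <;> rcases e5 with rfl | rfl <;> rcases e6 with rfl | rfl <;>
       first | (exfalso; omega) | decide
 · intro h
   fin_cases h <;> exact ⟨by decide, by decide⟩


lemma sum6 (x y z : Fin 7 → ℚ)
    (hx : interFormQ 6 x (canClassQ 6) = 0) (hy : interFormQ 6 y (canClassQ 6) = 0)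
    (hz : interFormQ 6 z (canClassQ 6) = 0) :
    (∑ᶠ A ∈ excClasses 6,
        interFormQ 6 x (toQ A) * interFormQ 6 y (toQ A) * interFormQ 6 (toQ A) z) = 0 := by
  have hset : excClasses 6 = ↑(L6.toFinset) := Set.ext fun A => by
    rw [Finset.mem_coe, List.mem_toFinset]; exact mem6 A
  rw [hset, finsum_mem_coe_finset, List.sum_toFinset _ (by decide : L6.Nodup)]
  simp only [L6, List.map_cons, List.map_nil, List.sum_cons, List.sum_nil]
  simp only [interFormQ, toQ, Fin.sum_univ_succ, Fin.sum_univ_zero, Matrix.cons_val_zero,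
    Matrix.cons_val_succ, add_zero]
  simp only [show Fin.succ (0 : Fin 1) = (1 : Fin 2) from rfl,
    show Fin.succ (0 : Fin 2) = (1 : Fin 3) from rfl,
    show Fin.succ (1 : Fin 2) = (2 : Fin 3) from rfl,
    show Fin.succ (0 : Fin 3) = (1 : Fin 4) from rfl,
    show Fin.succ (1 : Fin 3) = (2 : Fin 4) from rfl,
    show Fin.succ (2 : Fin 3) = (3 : Fin 4) from rfl,
    show Fin.succ (0 : Fin 4) = (1 : Fin 5) from rfl,
    show Fin.succ (1 : Fin 4) = (2 : Fin 5) from rfl,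
    show Fin.succ (2 : Fin 4) = (3 : Fin 5) from rfl,
    show Fin.succ (3 : Fin 4) = (4 : Fin 5) from rfl,
    show Fin.succ (0 : Fin 5) = (1 : Fin 6) from rfl,
    show Fin.succ (1 : Fin 5) = (2 : Fin 6) from rfl,
    show Fin.succ (2 : Fin 5) = (3 : Fin 6) from rfl,
    show Fin.succ (3 : Fin 5) = (4 : Fin 6) from rfl,
    show Fin.succ (4 : Fin 5) = (5 : Fin 6) from rfl,
    show Fin.succ (0 : Fin 6) = (1 : Fin 7) from rfl,
    show Fin.succ (1 : Fin 6) = (2 : Fin 7) from rfl,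
    show Fin.succ (2 : Fin 6) = (3 : Fin 7) from rfl,
    show Fin.succ (3 : Fin 6) = (4 : Fin 7) from rfl,
    show Fin.succ (4 : Fin 6) = (5 : Fin 7) from rfl,
    show Fin.succ (5 : Fin 6) = (6 : Fin 7) from rfl]
  simp only [interFormQ, canClassQ, Fin.sum_univ_succ, Fin.sum_univ_zero, Fin.succ_ne_zero,
    ne_eq, if_false, reduceIte, add_zero, mul_one, if_true,
    show Fin.succ (0 : Fin 1) = (1 : Fin 2) from rfl,
    show Fin.succ (0 : Fin 2) = (1 : Fin 3) from rfl,
    show Fin.succ (1 : Fin 2) = (2 : Fin 3) from rfl,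
    show Fin.succ (0 : Fin 3) = (1 : Fin 4) from rfl,
    show Fin.succ (1 : Fin 3) = (2 : Fin 4) from rfl,
    show Fin.succ (2 : Fin 3) = (3 : Fin 4) from rfl,
    show Fin.succ (0 : Fin 4) = (1 : Fin 5) from rfl,
    show Fin.succ (1 : Fin 4) = (2 : Fin 5) from rfl,
    show Fin.succ (2 : Fin 4) = (3 : Fin 5) from rfl,
    show Fin.succ (3 : Fin 4) = (4 : Fin 5) from rfl,
    show Fin.succ (0 : Fin 5) = (1 : Fin 6) from rfl,
    show Fin.succ (1 : Fin 5) = (2 : Fin 6) from rfl,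
    show Fin.succ (2 : Fin 5) = (3 : Fin 6) from rfl,
    show Fin.succ (3 : Fin 5) = (4 : Fin 6) from rfl,
    show Fin.succ (4 : Fin 5) = (5 : Fin 6) from rfl,
    show Fin.succ (0 : Fin 6) = (1 : Fin 7) from rfl,
    show Fin.succ (1 : Fin 6) = (2 : Fin 7) from rfl,
    show Fin.succ (2 : Fin 6) = (3 : Fin 7) from rfl,
    show Fin.succ (3 : Fin 6) = (4 : Fin 7) from rfl,
    show Fin.succ (4 : Fin 6) = (5 : Fin 7) from rfl,
    show Fin.succ (5 : Fin 6) = (6 : Fin 7) from rfl] at hx hy hz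
  push_cast
  linear_combination ((2:ℚ) * (y 0 * z 0 - (y 1 * z 1 + y 2 * z 2 + y 3 * z 3 + y 4 * z 4 + y 5 * z 5 + y 6 * z 6)) + (-3:ℚ) * ((-3) * y 0 - (y 1 + y 2 + y 3 + y 4 + y 5 + y 6)) * ((-3) * z 0 - (z 1 + z 2 + z 3 + z 4 + z 5 + z 6))) * hx + ((2:ℚ) * (x 0 * z 0 - (x 1 * z 1 + x 2 * z 2 + x 3 * z 3 + x 4 * z 4 + x 5 * z 5 + x 6 * z 6))) * hy + ((2:ℚ) * (x 0 * y 0 - (x 1 * y 1 + x 2 * y 2 + x 3 * y 3 + x 4 * y 4 + x 5 * y 5 + x 6 * y 6))) * hz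

lemma hfp7 : ∀ A : Fin 8 → ℤ, A ∈ excClasses 7 → invo 7 1 A ≠ A := by
  intro A _ h
  have h0 := congrFun h 0
  simp [invo, canClassZ] at h0
  omega

lemma hfp8 : ∀ A : Fin 9 → ℤ, A ∈ excClasses 8 → invo 8 2 A ≠ A := by
  intro A hA h
  obtain ⟨hsq, _⟩ := exc_expand hA
  have h0 := congrFun h 0
  simp [invo, canClassZ] at h0
  have hA0 : A 0 = 3 := by omega
  have hi : ∀ i : Fin 8, A i.succ = -1 := fun i => by
    have hh := congrFun h i.succ
    simp [invo, canClassZ, Fin.succ_ne_zero] at hh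
    omega
  rw [Finset.sum_congr rfl (fun i _ => by rw [hi i]), hA0] at hsq
  norm_num at hsq

/-- **For `5 ≤ k ≤ 8`, the set of exceptional classes is finite, and for `x, y, z ⊥ K`
the triple sum `Σ_{A ∈ ℰ} ⟨x,A⟩⟨y,A⟩⟨A,z⟩` vanishes**; i.e. for `x, y ⊥ K` the
first-order quantum correction `x ∗₁ y = Σ_{A∈ℰ} ⟨x,A⟩⟨y,A⟩·A` is a multiple of `K`. -/
theorem exc_sum_orthogonal (k : ℕ) (hk5 : 5 ≤ k) (hk8 : k ≤ 8) :
    (excClasses k).Finite ∧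
    ∀ x y z : Fin (k + 1) → ℚ,
      interFormQ k x (canClassQ k) = 0 → interFormQ k y (canClassQ k) = 0 →
      interFormQ k z (canClassQ k) = 0 →
      (∑ᶠ A ∈ excClasses k,
        interFormQ k x (toQ A) * interFormQ k y (toQ A) * interFormQ k (toQ A) z) = 0 := by
  refine ⟨excClasses_finite k hk8, ?_⟩
  intro x y z hx hy hz
  interval_cases k
  · exact sum5 x y z hx hy hz
  · exact sum6 x y z hx hy hz
  · exact sum_eq_zero_of_invo 7 1 (by norm_num) (by norm_num) hfp7 x y z hx hy hz
  · exact sum_eq_zero_of_invo 8 2 (by norm_num) (by norm_num) hfp8 x y z hx hy hz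
end
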